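/- arXiv:2202.08376 — 2 statements merged into one kernel-verified Lean document; each statement's English description precedes it below -/
import Mathlib

section
/- (Optimality of the scaled repulsion update for the variance objective) Let y₁,…,y_m be vectors with mean ȳ, not all equal, S = ∑ᵢ‖yᵢ - ȳ‖² > 0, ε > 0, and α* = ε/√S. Then x*ᵢ = yᵢ + α*(yᵢ - ȳ) satisfies ∑ᵢ‖x*ᵢ - yᵢ‖² ≤ ε², and for every family x'₁,…,x'_m with ∑ᵢ‖x'ᵢ - yᵢ‖² ≤ ε², one has ∑_{i,j}‖x'ᵢ - x'ⱼ‖² ≤ ∑_{i,j}‖x*ᵢ - x*ⱼ‖². -/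
/-!
Writing `Σᵢⱼ ‖xᵢ - xⱼ‖² = 2m Σᵢ ‖xᵢ - c‖² - 2 ‖Σᵢ (xᵢ - c)‖²`, the spread of any family is at
most `2m` times the square of its `ℓ²` distance to the constant family `ȳ`, with equality for
families centred at `ȳ` such as `x*`. By Minkowski's inequality that distance is at most `ε + √S`
when the family is `ε`-close to `y`, and `x* - ȳ = (1 + ε/√S)(y - ȳ)` attains exactly `ε + √S`.
-/

open Finset

section

variable {ι E : Type*} [Fintype ι] [AddCommGroup E] [Module ℝ E]

theorem sum_sub_mean_eq_zero (x : ι → E) :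
    ∑ i, (x i - (Fintype.card ι : ℝ)⁻¹ • ∑ j, x j) = 0 := by
  rcases isEmpty_or_nonempty ι with _ | _
  · simp
  rw [sum_sub_distrib, sum_const, card_univ, ← Nat.cast_smul_eq_nsmul ℝ, smul_smul,
    mul_inv_cancel₀ (by positivity), one_smul, sub_self]

end

section

variable {ι E : Type*} [Fintype ι] [NormedAddCommGroup E]

theorem sqrt_sum_norm_add_sq_le (u v : ι → E) :
    √(∑ i, ‖u i + v i‖ ^ 2) ≤ √(∑ i, ‖u i‖ ^ 2) + √(∑ i, ‖v i‖ ^ 2) := by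
  simpa only [PiLp.norm_eq_of_L2, WithLp.ofLp_add, Pi.add_apply] using
    norm_add_le (WithLp.toLp 2 u : PiLp 2 fun _ : ι => E) (WithLp.toLp 2 v)

theorem sum_norm_smul_sq [NormedSpace ℝ E] (a : ℝ) (u : ι → E) :
    ∑ i, ‖a • u i‖ ^ 2 = a ^ 2 * ∑ i, ‖u i‖ ^ 2 := by
  simp only [norm_smul, mul_pow, Real.norm_eq_abs, sq_abs, mul_sum]

variable [InnerProductSpace ℝ E]

theorem sum_sum_norm_sub_sq (x : ι → E) (c : E) :
    ∑ i, ∑ j, ‖x i - x j‖ ^ 2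
      = 2 * Fintype.card ι * ∑ i, ‖x i - c‖ ^ 2 - 2 * ‖∑ i, (x i - c)‖ ^ 2 := by
  have hpair (i j : ι) : ‖x i - x j‖ ^ 2
      = ‖x i - c‖ ^ 2 + ‖x j - c‖ ^ 2 - 2 * inner ℝ (x i - c) (x j - c) := by
    rw [show x i - x j = (x i - c) - (x j - c) by abel, norm_sub_sq_real]; ring
  simp only [hpair, sum_sub_distrib, sum_add_distrib, ← mul_sum, ← inner_sum, ← sum_inner,
    real_inner_self_eq_norm_sq, sum_const, card_univ, nsmul_eq_mul]
  ring

theorem sum_sum_norm_sub_sq_le (x : ι → E) (c : E) :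
    ∑ i, ∑ j, ‖x i - x j‖ ^ 2 ≤ 2 * Fintype.card ι * ∑ i, ‖x i - c‖ ^ 2 := by
  rw [sum_sum_norm_sub_sq x c]
  linarith [sq_nonneg ‖∑ i, (x i - c)‖]

theorem sum_sum_norm_sub_sq_of_sum_sub_eq_zero (x : ι → E) {c : E}
    (hc : ∑ i, (x i - c) = 0) :
    ∑ i, ∑ j, ‖x i - x j‖ ^ 2 = 2 * Fintype.card ι * ∑ i, ‖x i - c‖ ^ 2 := by
  rw [sum_sum_norm_sub_sq x c, hc, norm_zero]; ring

end

theorem scaled_repulsion_optimal_general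
    (n m : ℕ) (y : Fin m → EuclideanSpace ℝ (Fin n))
    (ybar : EuclideanSpace ℝ (Fin n)) (hybar : ybar = (m : ℝ)⁻¹ • ∑ i, y i)
    (S : ℝ) (hS : S = ∑ i, ‖y i - ybar‖ ^ 2) (hSpos : 0 < S)
    (ε : ℝ) (hε : 0 < ε)
    (xstar : Fin m → EuclideanSpace ℝ (Fin n))
    (hxstar : ∀ i, xstar i = y i + (ε / Real.sqrt S) • (y i - ybar)) :
    (∑ i, ‖xstar i - y i‖ ^ 2 ≤ ε ^ 2) ∧
    ∀ x' : Fin m → EuclideanSpace ℝ (Fin n),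
      ∑ i, ‖x' i - y i‖ ^ 2 ≤ ε ^ 2 →
      ∑ i, ∑ j, ‖x' i - x' j‖ ^ 2 ≤ ∑ i, ∑ j, ‖xstar i - xstar j‖ ^ 2 := by
  set α := ε / √S
  have hαS : α * √S = ε := div_mul_cancel₀ ε (Real.sqrt_pos.2 hSpos).ne'
  have hsq : √S ^ 2 = S := Real.sq_sqrt hSpos.le
  have hy : ∑ i, (y i - ybar) = 0 := by
    simpa only [hybar, Fintype.card_fin] using sum_sub_mean_eq_zero y
  have hstep (i : Fin m) : xstar i - y i = α • (y i - ybar) := by rw [hxstar i]; abel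
  have hcentre (i : Fin m) : xstar i - ybar = (1 + α) • (y i - ybar) := by
    rw [hxstar i, add_smul, one_smul]; abel
  refine ⟨le_of_eq ?_, fun x' hx' => ?_⟩
  · simp only [hstep]
    rw [sum_norm_smul_sq, ← hS, ← hsq, ← mul_pow, hαS]
  have hstar : ∑ i, ∑ j, ‖xstar i - xstar j‖ ^ 2 = 2 * m * (ε + √S) ^ 2 := by
    have hc : ∑ i, (xstar i - ybar) = 0 := by simp only [hcentre, ← smul_sum, hy, smul_zero]
    rw [sum_sum_norm_sub_sq_of_sum_sub_eq_zero xstar hc]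
    simp only [hcentre]
    rw [sum_norm_smul_sq, ← hS, Fintype.card_fin, ← hαS, ← add_one_mul α, mul_pow, hsq]
    ring
  have hdist : √(∑ i, ‖x' i - ybar‖ ^ 2) ≤ ε + √S := by
    have h := sqrt_sum_norm_add_sq_le (fun i => x' i - y i) (fun i => y i - ybar)
    simp only [sub_add_sub_cancel, ← hS] at h
    have : √(∑ i, ‖x' i - y i‖ ^ 2) ≤ ε := Real.sqrt_le_iff.2 ⟨hε.le, hx'⟩
    linarith
  calc ∑ i, ∑ j, ‖x' i - x' j‖ ^ 2
      ≤ 2 * m * ∑ i, ‖x' i - ybar‖ ^ 2 := by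
        simpa only [Fintype.card_fin] using sum_sum_norm_sub_sq_le x' ybar
    _ ≤ 2 * m * (ε + √S) ^ 2 := by
        gcongr
        exact (Real.sqrt_le_left (by positivity)).1 hdist
    _ = _ := hstar.symm

theorem scaled_repulsion_optimal
    (n m : ℕ) (hm : 2 ≤ m) (y : Fin m → EuclideanSpace ℝ (Fin n))
    (ybar : EuclideanSpace ℝ (Fin n)) (hybar : ybar = (m : ℝ)⁻¹ • ∑ i, y i)
    (S : ℝ) (hS : S = ∑ i, ‖y i - ybar‖ ^ 2) (hSpos : 0 < S)
    (ε : ℝ) (hε : 0 < ε)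
    (xstar : Fin m → EuclideanSpace ℝ (Fin n))
    (hxstar : ∀ i, xstar i = y i + (ε / Real.sqrt S) • (y i - ybar)) :
    (∑ i, ‖xstar i - y i‖ ^ 2 ≤ ε ^ 2) ∧
    ∀ x' : Fin m → EuclideanSpace ℝ (Fin n),
      ∑ i, ‖x' i - y i‖ ^ 2 ≤ ε ^ 2 →
      ∑ i, ∑ j, ‖x' i - x' j‖ ^ 2 ≤ ∑ i, ∑ j, ‖xstar i - xstar j‖ ^ 2 :=
  scaled_repulsion_optimal_general n m y ybar hybar S hS hSpos ε hε xstar hxstar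
end

section
/- Let f be (1/μ)-smooth with global minimum value f* = min f, y_i = x_i - μ∇f(x_i), η ∈ (0,1), α* = η√(∑ᵢ‖yᵢ-xᵢ‖²)/√(∑ᵢ‖yᵢ-ȳ‖²) (assuming the denominator is positive), and x'ᵢ = yᵢ + α*(yᵢ - ȳ). Then ∑ᵢ f(x'ᵢ) ≤ ∑ᵢ f(xᵢ) - (1-η²)(μ/2)∑ᵢ‖∇f(xᵢ)‖². (Descent guarantee of the diversified gradient update.) -/
/-!
The descent lemma for a `1/μ`-smooth function, written by completing the square, says
`f b ≤ f a - (μ/2)‖∇f a‖² + ‖b - (a - μ∇f a)‖²/(2μ)`: a point at distance `r` from the gradient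
step `a - μ∇f a` costs at most `r²/(2μ)` of the guaranteed decrease. The diversified point
`x'ᵢ` lies at distance `α*‖yᵢ - ȳ‖` from `yᵢ`, and `α*` is chosen so that
`α*² ∑ᵢ‖yᵢ - ȳ‖² = η² ∑ᵢ‖yᵢ - xᵢ‖² = η²μ² ∑ᵢ‖∇f(xᵢ)‖²`, so summing over `i` loses at most
the fraction `η²` of the gradient-step decrease (if all `yᵢ = ȳ`, division by zero makes
`α* = 0` and nothing is lost).
-/

open scoped RealInnerProductSpace

theorem le_add_deriv_add_half_of_deriv_sub_le {g g' : ℝ → ℝ} {c : ℝ}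
    (hg : ∀ t, HasDerivAt g (g' t) t) (hg' : ∀ t, 0 ≤ t → g' t - g' 0 ≤ c * t) :
    g 1 ≤ g 0 + g' 0 + c / 2 := by
  have hB : ∀ t, HasDerivAt (fun t => g 0 + t * g' 0 + c / 2 * t ^ 2) (g' 0 + c * t) t := by
    intro t
    refine ((((hasDerivAt_id' t).mul_const (g' 0)).const_add (g 0)).add
      ((hasDerivAt_pow 2 t).const_mul (c / 2))).congr_deriv ?_
    push_cast
    ring
  have key := image_le_of_deriv_right_le_deriv_boundary
    (fun t _ => (hg t).continuousAt.continuousWithinAt) (fun t _ => (hg t).hasDerivWithinAt)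
    (by simp) (fun t _ => (hB t).continuousAt.continuousWithinAt)
    (fun t _ => (hB t).hasDerivWithinAt) (fun t ht => by linarith [hg' t ht.1])
    (Set.right_mem_Icc.2 zero_le_one)
  simpa using key

theorem norm_fderiv_sub_le_of_norm_fderiv_fderiv_le {E F : Type*} [NormedAddCommGroup E]
    [NormedSpace ℝ E] [NormedAddCommGroup F] [NormedSpace ℝ F] {f : E → F} {L : ℝ}
    (hf : ContDiff ℝ 2 f) (hH : ∀ x, ‖fderiv ℝ (fderiv ℝ f) x‖ ≤ L) (p q : E) :
    ‖fderiv ℝ f p - fderiv ℝ f q‖ ≤ L * ‖p - q‖ :=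
  have hdf' : Differentiable ℝ (fderiv ℝ f) :=
    (hf.fderiv_right (m := 1) (by norm_num)).differentiable one_ne_zero
  Convex.norm_image_sub_le_of_norm_fderiv_le (fun z _ => hdf' z) (fun z _ => hH z)
    convex_univ trivial trivial

section Smooth

variable {E : Type*} [NormedAddCommGroup E] [InnerProductSpace ℝ E] [CompleteSpace E]
  {f : E → ℝ} {L : ℝ}

theorem le_add_inner_gradient_add_of_norm_fderiv_sub_le (hf : Differentiable ℝ f)
    (hL : ∀ p q, ‖fderiv ℝ f p - fderiv ℝ f q‖ ≤ L * ‖p - q‖) (a b : E) :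
    f b ≤ f a + ⟪gradient f a, b - a⟫ + L / 2 * ‖b - a‖ ^ 2 := by
  set v := b - a
  have hcurve : ∀ t : ℝ, HasDerivAt (fun t : ℝ => f (a + t • v)) (fderiv ℝ f (a + t • v) v) t :=
    fun t => (hf _).hasFDerivAt.comp_hasDerivAt t
      (by simpa using ((hasDerivAt_id t).smul_const v).const_add a)
  have hslope : ∀ t, 0 ≤ t →
      fderiv ℝ f (a + t • v) v - fderiv ℝ f (a + (0 : ℝ) • v) v ≤ L * ‖v‖ ^ 2 * t := by
    intro t ht
    calc fderiv ℝ f (a + t • v) v - fderiv ℝ f (a + (0 : ℝ) • v) v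
        = (fderiv ℝ f (a + t • v) - fderiv ℝ f a) v := by simp
      _ ≤ ‖fderiv ℝ f (a + t • v) - fderiv ℝ f a‖ * ‖v‖ :=
          (Real.le_norm_self _).trans (ContinuousLinearMap.le_opNorm _ _)
      _ ≤ L * ‖t • v‖ * ‖v‖ := by
          gcongr
          simpa using hL (a + t • v) a
      _ = L * ‖v‖ ^ 2 * t := by rw [norm_smul, Real.norm_of_nonneg ht]; ring
  have h := le_add_deriv_add_half_of_deriv_sub_le hcurve hslope
  have hgrad : ⟪gradient f a, v⟫ = fderiv ℝ f a v := InnerProductSpace.toDual_symm_apply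
  simp only [one_smul, zero_smul, add_zero, v, add_sub_cancel] at h hgrad
  linarith

theorem le_sub_norm_gradient_sq_add_norm_sub_gradient_step_sq {μ : ℝ} (hμ : 0 < μ)
    (hf : Differentiable ℝ f) (hL : ∀ p q, ‖fderiv ℝ f p - fderiv ℝ f q‖ ≤ 1 / μ * ‖p - q‖)
    (a b : E) :
    f b ≤ f a - μ / 2 * ‖gradient f a‖ ^ 2 + ‖b - (a - μ • gradient f a)‖ ^ 2 / (2 * μ) := by
  have hsq : ‖b - (a - μ • gradient f a)‖ ^ 2
      = ‖b - a‖ ^ 2 + 2 * μ * ⟪gradient f a, b - a⟫ + μ ^ 2 * ‖gradient f a‖ ^ 2 := by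
    rw [sub_sub_eq_add_sub, add_sub_right_comm, norm_add_sq_real, norm_smul,
      real_inner_smul_right, real_inner_comm, Real.norm_of_nonneg hμ.le]
    ring
  calc f b ≤ f a + ⟪gradient f a, b - a⟫ + 1 / μ / 2 * ‖b - a‖ ^ 2 :=
        le_add_inner_gradient_add_of_norm_fderiv_sub_le hf hL a b
    _ = _ := by rw [hsq]; field_simp; ring

end Smooth

theorem mul_sqrt_div_sqrt_sq_mul_le (c : ℝ) {A B : ℝ} (hA : 0 ≤ A) :
    (c * √A / √B) ^ 2 * B ≤ c ^ 2 * A := by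
  rcases le_or_gt B 0 with hB | hB
  · rw [Real.sqrt_eq_zero'.2 hB]
    simpa using mul_nonneg (sq_nonneg c) hA
  · rw [div_pow, mul_pow, Real.sq_sqrt hA, Real.sq_sqrt hB.le, div_mul_cancel₀ _ hB.ne']

theorem diversified_gradient_descent_guarantee_general
    (n m : ℕ) (f : EuclideanSpace ℝ (Fin n) → ℝ) (μ : ℝ) (hμ : 0 < μ)
    (hf : ContDiff ℝ 2 f)
    (hH : ∀ x, ‖fderiv ℝ (fderiv ℝ f) x‖ ≤ 1 / μ)
    (x : Fin m → EuclideanSpace ℝ (Fin n))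
    (y : Fin m → EuclideanSpace ℝ (Fin n))
    (hy : ∀ i, y i = x i - μ • gradient f (x i))
    (ybar : EuclideanSpace ℝ (Fin n))
    (η : ℝ)
    (αstar : ℝ)
    (hα : αstar = η * Real.sqrt (∑ i, ‖y i - x i‖ ^ 2) / Real.sqrt (∑ i, ‖y i - ybar‖ ^ 2))
    (x' : Fin m → EuclideanSpace ℝ (Fin n))
    (hx' : ∀ i, x' i = y i + αstar • (y i - ybar)) :
    ∑ i, f (x' i) ≤ ∑ i, f (x i)
      - (1 - η ^ 2) * (μ / 2) * ∑ i, ‖gradient f (x i)‖ ^ 2 := by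
  have hstep : ∀ i, f (x' i) ≤ f (x i) - μ / 2 * ‖gradient f (x i)‖ ^ 2
      + αstar ^ 2 * ‖y i - ybar‖ ^ 2 / (2 * μ) := by
    intro i
    rw [hx']
    have h := le_sub_norm_gradient_sq_add_norm_sub_gradient_step_sq hμ
      (hf.differentiable two_ne_zero) (norm_fderiv_sub_le_of_norm_fderiv_fderiv_le hf hH)
      (x i) (y i + αstar • (y i - ybar))
    rwa [← hy, add_sub_cancel_left, norm_smul, mul_pow, Real.norm_eq_abs, sq_abs] at h
  have hsum := Finset.sum_le_sum fun i (_ : i ∈ Finset.univ) => hstep i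
  simp only [Finset.sum_add_distrib, Finset.sum_sub_distrib, ← Finset.mul_sum,
    ← Finset.sum_div] at hsum
  have hyx : ∑ i, ‖y i - x i‖ ^ 2 = μ ^ 2 * ∑ i, ‖gradient f (x i)‖ ^ 2 := by
    simp only [Finset.mul_sum, hy, sub_sub_cancel_left, norm_neg, norm_smul, mul_pow,
      Real.norm_of_nonneg hμ.le]
  have hα2 := hα ▸ mul_sqrt_div_sqrt_sq_mul_le η (A := ∑ i, ‖y i - x i‖ ^ 2)
    (B := ∑ i, ‖y i - ybar‖ ^ 2) (by positivity)
  rw [hyx] at hα2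
  have hdiv : (αstar ^ 2 * ∑ i, ‖y i - ybar‖ ^ 2) / (2 * μ)
      ≤ η ^ 2 * (μ / 2) * ∑ i, ‖gradient f (x i)‖ ^ 2 := by
    rw [div_le_iff₀ (by positivity)]
    linarith
  linarith

theorem diversified_gradient_descent_guarantee
    (n m : ℕ) (f : EuclideanSpace ℝ (Fin n) → ℝ) (μ : ℝ) (hμ : 0 < μ)
    (hf : ContDiff ℝ 2 f)
    (hH : ∀ x, ‖fderiv ℝ (fderiv ℝ f) x‖ ≤ 1 / μ)
    (x : Fin m → EuclideanSpace ℝ (Fin n))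
    (y : Fin m → EuclideanSpace ℝ (Fin n))
    (hy : ∀ i, y i = x i - μ • gradient f (x i))
    (ybar : EuclideanSpace ℝ (Fin n)) (hybar : ybar = (m : ℝ)⁻¹ • ∑ i, y i)
    (hSpos : 0 < ∑ i, ‖y i - ybar‖ ^ 2)
    (η : ℝ) (hη : η ∈ Set.Ioo (0 : ℝ) 1)
    (αstar : ℝ)
    (hα : αstar = η * Real.sqrt (∑ i, ‖y i - x i‖ ^ 2) / Real.sqrt (∑ i, ‖y i - ybar‖ ^ 2))
    (x' : Fin m → EuclideanSpace ℝ (Fin n))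
    (hx' : ∀ i, x' i = y i + αstar • (y i - ybar)) :
    ∑ i, f (x' i) ≤ ∑ i, f (x i)
      - (1 - η ^ 2) * (μ / 2) * ∑ i, ‖gradient f (x i)‖ ^ 2 :=
  diversified_gradient_descent_guarantee_general n m f μ hμ hf hH x y hy ybar η αstar hα x' hx'
end
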